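/- arXiv:2201.08426 — 2 statements merged into one kernel-verified Lean document; each statement's English description precedes it below -/
import Mathlib

section
/- For every real u > 0 there exists a constant C > 0 such that for all t ≥ 0 one has |Φ̄(t,u) - 1| ≤ C e^{-2t}; that is, u = 1 is an exponentially stable fixed point of the flow Φ̄ for positive initial data. -/
/-
Since `Φ̄ ≥ 0`, `|Φ̄ - 1| ≤ |Φ̄ - 1| (Φ̄ + 1) = |Φ̄² - 1|`, and squaring removes the root:
`Φ̄² - 1 = (u² - 1) / (1 + (e^{2t} - 1) u²)`. The denominator is `(1 - u²) + e^{2t} u²`, which is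
at least `e^{2t} min(1, u²)`, so `|Φ̄ - 1| ≤ |u² - 1| / min(1, u²) · e^{-2t}`.
-/

open Real Filter

/-- `Φ̄(t,u) = e^t u / sqrt(1 + (e^{2t} - 1) u²)`. -/
noncomputable def PhiBar (t u : ℝ) : ℝ :=
  Real.exp t * u / Real.sqrt (1 + (Real.exp (2 * t) - 1) * u ^ 2)

lemma abs_sub_one_le_abs_sq_sub_one {x : ℝ} (hx : 0 ≤ x) : |x - 1| ≤ |x ^ 2 - 1| := by
  rw [show x ^ 2 - 1 = (x - 1) * (x + 1) by ring, abs_mul, abs_of_pos (by linarith : 0 < x + 1)]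
  nlinarith [abs_nonneg (x - 1)]

lemma PhiBar_nonneg (t : ℝ) {u : ℝ} (hu : 0 ≤ u) : 0 ≤ PhiBar t u := by
  unfold PhiBar
  positivity

lemma one_le_PhiBar_denom {t : ℝ} (ht : 0 ≤ t) (u : ℝ) :
    1 ≤ 1 + (exp (2 * t) - 1) * u ^ 2 := by
  have : 1 ≤ exp (2 * t) := one_le_exp (by linarith)
  nlinarith [sq_nonneg u]

lemma exp_mul_min_le_PhiBar_denom {t : ℝ} (ht : 0 ≤ t) (u : ℝ) :
    exp (2 * t) * min 1 (u ^ 2) ≤ 1 + (exp (2 * t) - 1) * u ^ 2 := by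
  have : 1 ≤ exp (2 * t) := one_le_exp (by linarith)
  rcases le_total (u ^ 2) 1 with h | h
  · rw [min_eq_right h]
    linarith
  · rw [min_eq_left h]
    nlinarith

lemma PhiBar_sq_sub_one {t : ℝ} (ht : 0 ≤ t) (u : ℝ) :
    PhiBar t u ^ 2 - 1 = (u ^ 2 - 1) / (1 + (exp (2 * t) - 1) * u ^ 2) := by
  have hD := zero_lt_one.trans_le (one_le_PhiBar_denom ht u)
  rw [PhiBar, div_pow, sq_sqrt hD.le, mul_pow, ← exp_nat_mul, Nat.cast_ofNat, div_sub_one hD.ne']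
  ring

/-- For every `u > 0` there is `C > 0` with `|Φ̄(t,u) - 1| ≤ C e^{-2t}` for all `t ≥ 0`:
`u = 1` is an exponentially stable fixed point of the flow for positive initial data. -/
theorem stmt5 (u : ℝ) (hu : 0 < u) :
    ∃ C : ℝ, 0 < C ∧ ∀ t : ℝ, 0 ≤ t → |PhiBar t u - 1| ≤ C * Real.exp (-2 * t) := by
  have hm : 0 < min 1 (u ^ 2) := lt_min one_pos (pow_pos hu 2)
  -- the `+ 1` keeps `C` positive when `u = 1`
  refine ⟨(|u ^ 2 - 1| + 1) / min 1 (u ^ 2), by positivity, fun t ht => ?_⟩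
  have hD := one_le_PhiBar_denom ht u
  calc |PhiBar t u - 1|
      ≤ |PhiBar t u ^ 2 - 1| := abs_sub_one_le_abs_sq_sub_one (PhiBar_nonneg t hu.le)
    _ = |u ^ 2 - 1| / (1 + (exp (2 * t) - 1) * u ^ 2) := by
      rw [PhiBar_sq_sub_one ht, abs_div, abs_of_pos (zero_lt_one.trans_le hD)]
    _ ≤ (|u ^ 2 - 1| + 1) / (exp (2 * t) * min 1 (u ^ 2)) :=
      div_le_div₀ (by positivity) (by linarith) (by positivity)
        (exp_mul_min_le_PhiBar_denom ht u)
    _ = (|u ^ 2 - 1| + 1) / min 1 (u ^ 2) * exp (-2 * t) := by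
      rw [neg_mul, exp_neg]
      field_simp
end

section
/- A priori bound for the Allen–Cahn equation: Let d ≥ 1 and let u : [0,∞) × ℝ^d → ℝ be continuous, C^1 in time and C^2 in space on (0,∞) × ℝ^d, bounded on [δ,T] × ℝ^d for every 0 < δ < T, solving ∂_t u = Δu + u - u^3 on (0,∞) × ℝ^d with initial condition u(0,·) = u_0, where u_0 is continuous and satisfies sup_{x ∈ ℝ^d} |u_0(x)| e^{-|x|} < ∞. Then for every t > 0 and x ∈ ℝ^d one has |u(t,x)| ≤ e^t / sqrt(e^{2t} - 1). -/
/-!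
The function `φ(r) = (1 - e^{-2r})^{-1/2} = e^r / √(e^{2r} - 1)` solves `φ' = φ - φ³`, is at
least `1` and blows up as `r → 0⁺`. If `u ≤ M` on `[δ, t] × ℝ^d`, choose `r > 0` with
`φ(r) ≥ M`: the shifted barrier `φ(s - δ + r)` lies above `u` at `s = δ`, and by the maximum
principle it stays above `u`, because at a positive maximum of `u - φ(s - δ + r)` the reaction
term `x - x³`, decreasing on `[1, ∞)`, is smaller at `u` than at `φ`. Hence
`u(t) ≤ φ(t - δ + r) ≤ φ(t - δ)`, and `δ → 0` gives `u ≤ φ(t)`; the same holds for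
`-u`, which solves the same equation.
-/

open Real Filter MeasureTheory

/-- The Laplacian of `f : ℝ^d → ℝ`: the sum of the second partial derivatives in the
`d` coordinate directions. -/
noncomputable def laplacian {d : ℕ} (f : EuclideanSpace ℝ (Fin d) → ℝ)
    (x : EuclideanSpace ℝ (Fin d)) : ℝ :=
  ∑ i : Fin d,
    fderiv ℝ (fun y => fderiv ℝ f y (EuclideanSpace.single i 1)) x (EuclideanSpace.single i 1)

open Set Topology

theorem IsLocalMax.deriv_deriv_nonpos {f : ℝ → ℝ} {a : ℝ} (h : IsLocalMax f a)
    (hc : ContinuousAt f a) : deriv (deriv f) a ≤ 0 := by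
  -- otherwise the second derivative test makes `a` a local minimum too, so `f` is locally constant
  by_contra! hpos
  have hmin := isLocalMin_of_deriv_deriv_pos hpos h.deriv_eq_zero hc
  have hconst : f =ᶠ[𝓝 a] fun _ => f a := (h.and hmin).mono fun x hx => le_antisymm hx.1 hx.2
  have := hconst.deriv.deriv_eq
  simp_all

theorem IsMaxOn.hasDerivAt_nonneg_of_right {f : ℝ → ℝ} {a b f' : ℝ} (hab : a < b)
    (h : IsMaxOn f (Icc a b) b) (hf : HasDerivAt f f' b) : 0 ≤ f' := by
  have hcone : a - b ∈ posTangentConeAt (Icc a b) b :=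
    sub_mem_posTangentConeAt_of_segment_subset (by rw [segment_symm, segment_eq_Icc hab.le])
  have := h.localize.hasFDerivWithinAt_nonpos hf.hasFDerivAt.hasFDerivWithinAt hcone
  simp only [ContinuousLinearMap.toSpanSingleton_apply, smul_eq_mul] at this
  nlinarith

section SecondDerivative

variable {E : Type*} [NormedAddCommGroup E]

theorem ContDiff.differentiable_fderiv_apply [NormedSpace ℝ E] {f : E → ℝ}
    (hf : ContDiff ℝ 2 f) (v : E) : Differentiable ℝ fun y => fderiv ℝ f y v :=
  ((hf.fderiv_right (m := 1) le_rfl).differentiable one_ne_zero).clm_apply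
    (differentiable_const v)

theorem IsLocalMax.fderiv_fderiv_apply_nonpos [NormedSpace ℝ E] {f : E → ℝ} {x : E}
    (h : IsLocalMax f x) (hf : ContDiff ℝ 2 f) (v : E) :
    fderiv ℝ (fun y => fderiv ℝ f y v) x v ≤ 0 := by
  have hline (s : ℝ) : HasDerivAt (fun s : ℝ => x + s • v) v s := by
    simpa using ((hasDerivAt_id s).smul_const v).const_add x
  have hderiv : deriv (fun s : ℝ => f (x + s • v)) = fun s => fderiv ℝ f (x + s • v) v :=
    funext fun s =>
      ((hf.differentiable two_ne_zero _).hasFDerivAt.comp_hasDerivAt s (hline s)).deriv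
  have hdf := hf.differentiable_fderiv_apply v
  have hderiv2 : HasDerivAt (fun s : ℝ => fderiv ℝ f (x + s • v) v)
      (fderiv ℝ (fun y => fderiv ℝ f y v) x v) 0 :=
    (hdf x).hasFDerivAt.comp_hasDerivAt_of_eq (0 : ℝ) (hline 0) (by simp)
  have hmax : IsLocalMax (fun s : ℝ => f (x + s • v)) 0 :=
    IsLocalMax.comp_continuous (g := fun s : ℝ => x + s • v) (by simpa using h)
      (hline 0).continuousAt
  rw [← hderiv2.deriv, ← hderiv]
  exact hmax.deriv_deriv_nonpos (hf.continuous.continuousAt.comp (hline 0).continuousAt)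

theorem fderiv_fderiv_apply_sub_mul_norm_sq [InnerProductSpace ℝ E] {f : E → ℝ}
    (hf : ContDiff ℝ 2 f) (c : ℝ) (x v : E) :
    fderiv ℝ (fun y => fderiv ℝ (fun z => f z - c * ‖z‖ ^ 2) y v) x v
      = fderiv ℝ (fun y => fderiv ℝ f y v) x v - 2 * c * ‖v‖ ^ 2 := by
  have hfirst : (fun y => fderiv ℝ (fun z => f z - c * ‖z‖ ^ 2) y v)
      = fun y => fderiv ℝ f y v - 2 * c * inner ℝ v y := by
    funext y
    have hsq : HasFDerivAt (fun z => c * ‖z‖ ^ 2) (c • 2 • innerSL ℝ y) y :=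
      (hasStrictFDerivAt_norm_sq y).hasFDerivAt.const_mul c
    rw [fderiv_fun_sub (hf.differentiable two_ne_zero y) hsq.differentiableAt, hsq.fderiv]
    simp [real_inner_comm]
    ring
  have hlin : HasFDerivAt (fun y => 2 * c * inner ℝ v y) ((2 * c) • innerSL ℝ v) x :=
    (innerSL ℝ v).hasFDerivAt.const_mul (2 * c)
  rw [hfirst, fderiv_fun_sub (hf.differentiable_fderiv_apply v x) hlin.differentiableAt,
    hlin.fderiv]
  simp

end SecondDerivative

section Laplacian

variable {d : ℕ} {f : EuclideanSpace ℝ (Fin d) → ℝ} {x : EuclideanSpace ℝ (Fin d)}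

theorem IsLocalMax.laplacian_nonpos (h : IsLocalMax f x) (hf : ContDiff ℝ 2 f) :
    laplacian f x ≤ 0 :=
  Finset.sum_nonpos fun _ _ => h.fderiv_fderiv_apply_nonpos hf _

theorem laplacian_sub_mul_norm_sq (hf : ContDiff ℝ 2 f) (c : ℝ) :
    laplacian (fun y => f y - c * ‖y‖ ^ 2) x = laplacian f x - 2 * d * c := by
  simp [laplacian, fderiv_fderiv_apply_sub_mul_norm_sq hf, Finset.sum_sub_distrib]
  ring

theorem laplacian_neg : laplacian (fun y => -f y) x = -laplacian f x := by
  simp [laplacian, fderiv_fun_neg]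

end Laplacian

theorem exists_isMaxOn_Icc_prod_univ {E : Type*} [NormedAddCommGroup E] [ProperSpace E]
    {Z : ℝ × E → ℝ} {a b M η : ℝ} (hη : 0 < η) (hZ : ContinuousOn Z (Icc a b ×ˢ univ))
    (hZM : ∀ p ∈ Icc a b ×ˢ univ, Z p ≤ M - η * ‖p.2‖ ^ 2) {p₁ : ℝ × E}
    (hp₁ : p₁ ∈ Icc a b ×ˢ univ) :
    ∃ p ∈ Icc a b ×ˢ univ, IsMaxOn Z (Icc a b ×ˢ univ) p := by
  refine hZ.exists_isMaxOn' (isClosed_Icc.prod isClosed_univ) hp₁ ?_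
  set R := max 1 ((M - Z p₁) / η)
  have hK : IsCompact (Icc a b ×ˢ Metric.closedBall (0 : E) R) :=
    isCompact_Icc.prod (isCompact_closedBall 0 R)
  refine mem_inf_of_inter hK.compl_mem_cocompact (mem_principal_self _) ?_
  rintro ⟨s, y⟩ ⟨hsy, hs, -⟩
  have hR : R < ‖y‖ := by
    by_contra! hy
    exact hsy ⟨hs, by simpa using hy⟩
  have hy : M - Z p₁ < η * ‖y‖ ^ 2 := by
    have h1 : 1 < ‖y‖ := (le_max_left _ _).trans_lt hR
    have h2 : M - Z p₁ < η * ‖y‖ := (div_lt_iff₀' hη).mp ((le_max_right _ _).trans_lt hR)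
    have h3 : η * ‖y‖ ≤ η * ‖y‖ ^ 2 := by
      rw [sq, ← mul_assoc]
      exact le_mul_of_one_le_right (by positivity) h1.le
    linarith
  have hZy := hZM (s, y) ⟨hs, trivial⟩
  show Z (s, y) ≤ Z p₁
  linarith

theorem strictAntiOn_sub_cube : StrictAntiOn (fun x : ℝ => x - x ^ 3) (Ici 1) := by
  intro a (ha : 1 ≤ a) b _ hab
  nlinarith [mul_pos (sub_pos.mpr hab) (by nlinarith : 0 < a ^ 2 + a * b + b ^ 2 - 1)]

namespace AllenCahn

noncomputable def barrier (r : ℝ) : ℝ := (√(1 - exp (-2 * r)))⁻¹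

lemma one_sub_exp_neg_two_mul_pos {r : ℝ} (hr : 0 < r) : 0 < 1 - exp (-2 * r) := by
  have : exp (-2 * r) < 1 := exp_lt_one_iff.mpr (by linarith)
  linarith

lemma one_le_barrier {r : ℝ} (hr : 0 < r) : 1 ≤ barrier r := by
  rw [barrier, one_le_inv₀ (sqrt_pos.mpr (one_sub_exp_neg_two_mul_pos hr))]
  exact sqrt_le_one.mpr (by linarith [exp_pos (-2 * r)])

lemma barrier_antitoneOn : AntitoneOn barrier (Ioi 0) := by
  intro r₁ hr₁ r₂ _ h
  refine inv_anti₀ (sqrt_pos.mpr (one_sub_exp_neg_two_mul_pos hr₁)) (sqrt_le_sqrt ?_)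
  linarith [exp_le_exp.mpr (by linarith : -2 * r₂ ≤ -2 * r₁)]

lemma hasDerivAt_barrier {r : ℝ} (hr : 0 < r) :
    HasDerivAt barrier (barrier r - barrier r ^ 3) r := by
  have ha := one_sub_exp_neg_two_mul_pos hr
  have hs : 0 < √(1 - exp (-2 * r)) := sqrt_pos.mpr ha
  have hsq : √(1 - exp (-2 * r)) ^ 2 = 1 - exp (-2 * r) := sq_sqrt ha.le
  have hlin : HasDerivAt (fun s : ℝ => 1 - exp (-2 * s)) (2 * exp (-2 * r)) r :=
    ((((hasDerivAt_id r).const_mul (-2)).exp.const_sub 1).congr_deriv (by simp; ring))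
  refine (((hlin.sqrt ha.ne').inv hs.ne' : _) : HasDerivAt barrier _ r).congr_deriv ?_
  simp only [barrier]
  generalize √(1 - exp (-2 * r)) = s at hs hsq ⊢
  generalize exp (-2 * r) = e at hsq ⊢
  field_simp
  linear_combination -hsq

lemma tendsto_barrier_nhdsGT_zero : Tendsto barrier (𝓝[>] 0) atTop := by
  refine Tendsto.inv_tendsto_nhdsGT_zero (tendsto_nhdsWithin_iff.mpr ⟨?_, ?_⟩)
  · have : Continuous fun r : ℝ => √(1 - exp (-2 * r)) := by fun_prop
    simpa using (this.tendsto 0).mono_left nhdsWithin_le_nhds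
  · filter_upwards [self_mem_nhdsWithin] with r hr
    exact sqrt_pos.mpr (one_sub_exp_neg_two_mul_pos hr)

lemma barrier_eq_exp_div_sqrt (t : ℝ) : barrier t = exp t / √(exp (2 * t) - 1) := by
  have h : exp (2 * t) - 1 = exp t ^ 2 * (1 - exp (-2 * t)) := by
    have hsq : exp t ^ 2 = exp (2 * t) := by rw [← exp_nat_mul]; norm_num
    have hinv : exp (2 * t) * exp (-2 * t) = 1 := by rw [← exp_add]; simp
    rw [hsq]; linear_combination hinv
  rw [h, sqrt_mul (sq_nonneg _), sqrt_sq (exp_pos t).le, barrier,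
    div_mul_cancel_left₀ (exp_pos t).ne']

variable {d : ℕ}

structure IsSolution (u : ℝ → EuclideanSpace ℝ (Fin d) → ℝ) : Prop where
  continuousOn :
    ContinuousOn (fun p : ℝ × EuclideanSpace ℝ (Fin d) => u p.1 p.2) (Ioi 0 ×ˢ univ)
  contDiff_space : ∀ t, 0 < t → ContDiff ℝ 2 (u t)
  hasDerivAt_time : ∀ t, 0 < t → ∀ x,
    HasDerivAt (fun s => u s x) (laplacian (u t) x + u t x - u t x ^ 3) t

variable {u : ℝ → EuclideanSpace ℝ (Fin d) → ℝ}

theorem IsSolution.neg (hu : IsSolution u) : IsSolution fun t x => -u t x where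
  continuousOn := hu.continuousOn.neg
  contDiff_space t ht := (hu.contDiff_space t ht).neg
  hasDerivAt_time t ht x := by
    refine (hu.hasDerivAt_time t ht x).neg.congr_deriv ?_
    rw [laplacian_neg]
    ring

/-- The penalty `η (2 d t + ‖x‖²)` solves the heat equation and forces a maximum in space. -/
noncomputable def penalizedExcess (u : ℝ → EuclideanSpace ℝ (Fin d) → ℝ) (c η : ℝ)
    (p : ℝ × EuclideanSpace ℝ (Fin d)) : ℝ :=
  u p.1 p.2 - barrier (p.1 - c) - η * (2 * d * p.1 + ‖p.2‖ ^ 2)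

theorem IsSolution.le_barrier_of_isMaxOn (hu : IsSolution u) {c η δ t₀ : ℝ}
    {y₀ : EuclideanSpace ℝ (Fin d)} (ht₀ : 0 < t₀) (hc : c < t₀) (hδ : δ < t₀)
    (hmax : IsMaxOn (penalizedExcess u c η) (Icc δ t₀ ×ˢ univ) (t₀, y₀)) :
    u t₀ y₀ ≤ barrier (t₀ - c) := by
  have hu₀ := hu.contDiff_space t₀ ht₀
  have hspace : laplacian (u t₀) y₀ ≤ 2 * d * η := by
    have hloc : IsLocalMax (fun y => u t₀ y - η * ‖y‖ ^ 2) y₀ := by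
      refine (isMaxOn_univ_iff.mpr fun y => ?_).isLocalMax univ_mem
      have := isMaxOn_iff.mp hmax (t₀, y) ⟨right_mem_Icc.mpr hδ.le, mem_univ y⟩
      simp only [penalizedExcess] at this
      linarith
    have := hloc.laplacian_nonpos (hu₀.sub (contDiff_const.mul (contDiff_norm_sq ℝ)))
    rw [laplacian_sub_mul_norm_sq hu₀] at this
    linarith
  have htime : 0 ≤ laplacian (u t₀) y₀ + u t₀ y₀ - u t₀ y₀ ^ 3
      - (barrier (t₀ - c) - barrier (t₀ - c) ^ 3) - η * (2 * (d : ℝ)) := by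
    have hbar : HasDerivAt (fun s => barrier (s - c)) _ t₀ :=
      (hasDerivAt_barrier (sub_pos.mpr hc)).comp_sub_const t₀ c
    have hpen :
        HasDerivAt (fun s : ℝ => η * (2 * d * s + ‖y₀‖ ^ 2)) (η * (2 * (d : ℝ))) t₀ := by
      simpa using
        (((hasDerivAt_id t₀).const_mul (2 * (d : ℝ))).add_const (‖y₀‖ ^ 2)).const_mul η
    refine IsMaxOn.hasDerivAt_nonneg_of_right (f := fun s => penalizedExcess u c η (s, y₀)) hδ
      (fun s hs => hmax (⟨hs, mem_univ y₀⟩ : (s, y₀) ∈ Icc δ t₀ ×ˢ univ)) ?_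
    exact ((hu.hasDerivAt_time t₀ ht₀ y₀).sub hbar).sub hpen
  by_contra! hlt
  have := strictAntiOn_sub_cube (one_le_barrier (sub_pos.mpr hc))
    ((one_le_barrier (sub_pos.mpr hc)).trans hlt.le) hlt
  simp only at this
  linarith

theorem IsSolution.penalizedExcess_nonpos (hu : IsSolution u) {δ T r M η : ℝ} (hδ : 0 < δ)
    (hr : 0 < r) (hη : 0 < η) (hM : ∀ s ∈ Icc δ T, ∀ y, u s y ≤ M)
    (hMr : M ≤ barrier r) {s : ℝ} (hs : s ∈ Icc δ T) (y : EuclideanSpace ℝ (Fin d)) :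
    penalizedExcess u (δ - r) η (s, y) ≤ 0 := by
  have hpen (p : ℝ × EuclideanSpace ℝ (Fin d)) (hp : 0 ≤ p.1) :
      0 ≤ η * (2 * d * p.1 + ‖p.2‖ ^ 2) := by positivity
  have hcont : ContinuousOn (penalizedExcess u (δ - r) η) (Icc δ T ×ˢ univ) := by
    have hbar : ContinuousOn (fun p : ℝ × EuclideanSpace ℝ (Fin d) => barrier (p.1 - (δ - r)))
        (Icc δ T ×ˢ univ) := fun p hp => by
      have hpos : 0 < p.1 - (δ - r) := by linarith [hp.1.1]
      exact ((hasDerivAt_barrier hpos).continuousAt.comp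
        (f := fun p : ℝ × EuclideanSpace ℝ (Fin d) => p.1 - (δ - r)) (by fun_prop))
          |>.continuousWithinAt
    refine ((hu.continuousOn.mono ?_).sub hbar).sub (by fun_prop)
    exact prod_mono (fun t ht => hδ.trans_le ht.1) subset_rfl
  have hbound : ∀ p ∈ Icc δ T ×ˢ univ,
      penalizedExcess u (δ - r) η p ≤ M - η * ‖p.2‖ ^ 2 := by
    rintro ⟨t, x⟩ ⟨ht, -⟩
    have hbar := one_le_barrier (by linarith [ht.1] : 0 < t - (δ - r))
    have hux := hM t ht x
    have hpen_t : 0 ≤ η * (2 * d * t) := by have := hδ.le.trans ht.1; positivity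
    simp only [penalizedExcess]
    linarith
  by_contra! hpos
  obtain ⟨⟨t₀, y₀⟩, ⟨ht₀, -⟩, hmax⟩ :=
    exists_isMaxOn_Icc_prod_univ hη hcont hbound (mk_mem_prod hs (mem_univ y))
  have hpos₀ := hpos.trans_le (hmax ⟨hs, mem_univ y⟩)
  have hδt₀ : δ < t₀ := by
    refine ht₀.1.lt_of_ne fun hδt₀ => hpos₀.not_ge ?_
    subst hδt₀
    have hu₀ := hM δ ht₀ y₀
    have hpen₀ := hpen (δ, y₀) hδ.le
    simp only [penalizedExcess, sub_sub_cancel] at hpen₀ ⊢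
    linarith
  have hle := hu.le_barrier_of_isMaxOn (hδ.trans hδt₀) (by linarith) hδt₀
    (hmax.on_subset (prod_mono (Icc_subset_Icc_right ht₀.2) subset_rfl))
  have hpen₀ := hpen (t₀, y₀) (by linarith)
  simp only [penalizedExcess] at hpos₀ hpen₀
  linarith

theorem IsSolution.le_shifted_barrier (hu : IsSolution u) {δ T r M : ℝ} (hδ : 0 < δ)
    (hr : 0 < r) (hM : ∀ s ∈ Icc δ T, ∀ y, u s y ≤ M) (hMr : M ≤ barrier r)
    {s : ℝ} (hs : s ∈ Icc δ T) (y : EuclideanSpace ℝ (Fin d)) :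
    u s y ≤ barrier (s - (δ - r)) := by
  have hlim : Tendsto (fun η => η * (2 * d * s + ‖y‖ ^ 2)) (𝓝[>] 0) (𝓝 0) :=
    ((continuous_mul_const _).tendsto' 0 0 (zero_mul _)).mono_left nhdsWithin_le_nhds
  rw [← sub_nonpos]
  refine ge_of_tendsto hlim ?_
  filter_upwards [self_mem_nhdsWithin] with η hη
  have := hu.penalizedExcess_nonpos hδ hr hη hM hMr hs y
  simp only [penalizedExcess] at this
  linarith

theorem IsSolution.le_barrier (hu : IsSolution u)
    (hbdd : ∀ δ T : ℝ, 0 < δ → δ < T → ∃ M : ℝ, ∀ t ∈ Icc δ T, ∀ x, u t x ≤ M)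
    {t : ℝ} (ht : 0 < t) (x : EuclideanSpace ℝ (Fin d)) : u t x ≤ barrier t := by
  have hlim : Tendsto (fun δ => barrier (t - δ)) (𝓝[>] 0) (𝓝 (barrier t)) := by
    have : Tendsto (fun δ : ℝ => t - δ) (𝓝[>] 0) (𝓝 t) :=
      ((continuous_sub_left t).tendsto' 0 t (sub_zero t)).mono_left nhdsWithin_le_nhds
    exact (hasDerivAt_barrier ht).continuousAt.tendsto.comp this
  refine ge_of_tendsto hlim ?_
  filter_upwards [Ioo_mem_nhdsGT ht] with δ hδ
  obtain ⟨M, hM⟩ := hbdd δ t hδ.1 hδ.2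
  obtain ⟨r, hMr, hr⟩ :=
    ((tendsto_barrier_nhdsGT_zero.eventually_ge_atTop M).and self_mem_nhdsWithin).exists
  calc u t x ≤ barrier (t - (δ - r)) :=
        hu.le_shifted_barrier hδ.1 hr hM hMr ⟨hδ.2.le, le_rfl⟩ x
    _ ≤ barrier (t - δ) :=
        barrier_antitoneOn (sub_pos.mpr hδ.2) (by simp only [mem_Ioi] at hr ⊢; linarith [hδ.2])
          (by linarith)

end AllenCahn

theorem stmt8_general (d : ℕ) (u : ℝ → EuclideanSpace ℝ (Fin d) → ℝ)
    (h_cont : ContinuousOn (fun p : ℝ × EuclideanSpace ℝ (Fin d) => u p.1 p.2)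
      (Set.Ici 0 ×ˢ Set.univ))
    (h_time : ∀ t : ℝ, 0 < t → ∀ x, ContDiffAt ℝ 1 (fun s => u s x) t)
    (h_space : ∀ t : ℝ, 0 < t → ∀ x, ContDiffAt ℝ 2 (fun y => u t y) x)
    (h_bdd : ∀ δ T : ℝ, 0 < δ → δ < T → ∃ M : ℝ, ∀ t ∈ Set.Icc δ T, ∀ x, |u t x| ≤ M)
    (h_pde : ∀ t : ℝ, 0 < t → ∀ x,
      deriv (fun s => u s x) t = laplacian (u t) x + u t x - (u t x) ^ 3) :
    ∀ t : ℝ, 0 < t → ∀ x, |u t x| ≤ Real.exp t / Real.sqrt (Real.exp (2 * t) - 1) := by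
  have hu : AllenCahn.IsSolution u :=
    { continuousOn := h_cont.mono (prod_mono Ioi_subset_Ici_self subset_rfl)
      contDiff_space := fun t ht => contDiff_iff_contDiffAt.mpr (h_space t ht)
      hasDerivAt_time := fun t ht x =>
        h_pde t ht x ▸ ((h_time t ht x).differentiableAt one_ne_zero).hasDerivAt }
  have hbdd_above (δ T : ℝ) (hδ : 0 < δ) (hδT : δ < T) :
      ∃ M : ℝ, ∀ t ∈ Icc δ T, ∀ x, u t x ≤ M :=
    (h_bdd δ T hδ hδT).imp fun M hM t ht x => (le_abs_self _).trans (hM t ht x)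
  have hbdd_below (δ T : ℝ) (hδ : 0 < δ) (hδT : δ < T) :
      ∃ M : ℝ, ∀ t ∈ Icc δ T, ∀ x, -u t x ≤ M :=
    (h_bdd δ T hδ hδT).imp fun M hM t ht x => (neg_le_abs _).trans (hM t ht x)
  intro t ht x
  rw [← AllenCahn.barrier_eq_exp_div_sqrt, abs_le]
  exact ⟨neg_le.mp (hu.neg.le_barrier hbdd_below ht x), hu.le_barrier hbdd_above ht x⟩

/-- A priori bound for the Allen–Cahn equation `∂_t u = Δu + u - u³` on `(0,∞) × ℝ^d`
with continuous initial condition `u₀` of at most exponential growth: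
`|u(t,x)| ≤ e^t / sqrt(e^{2t} - 1)` for all `t > 0`. -/
theorem stmt8 (d : ℕ) (hd : 1 ≤ d) (u : ℝ → EuclideanSpace ℝ (Fin d) → ℝ)
    (u₀ : EuclideanSpace ℝ (Fin d) → ℝ)
    (h_cont : ContinuousOn (fun p : ℝ × EuclideanSpace ℝ (Fin d) => u p.1 p.2)
      (Set.Ici 0 ×ˢ Set.univ))
    (h_time : ∀ t : ℝ, 0 < t → ∀ x, ContDiffAt ℝ 1 (fun s => u s x) t)
    (h_space : ∀ t : ℝ, 0 < t → ∀ x, ContDiffAt ℝ 2 (fun y => u t y) x)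
    (h_bdd : ∀ δ T : ℝ, 0 < δ → δ < T → ∃ M : ℝ, ∀ t ∈ Set.Icc δ T, ∀ x, |u t x| ≤ M)
    (h_pde : ∀ t : ℝ, 0 < t → ∀ x,
      deriv (fun s => u s x) t = laplacian (u t) x + u t x - (u t x) ^ 3)
    (h_init : ∀ x, u 0 x = u₀ x)
    (h_u₀_cont : Continuous u₀)
    (h_growth : ∃ M : ℝ, ∀ x, |u₀ x| * Real.exp (-‖x‖) ≤ M) :
    ∀ t : ℝ, 0 < t → ∀ x, |u t x| ≤ Real.exp t / Real.sqrt (Real.exp (2 * t) - 1) :=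
  stmt8_general d u h_cont h_time h_space h_bdd h_pde
end
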